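/- Let K, μ, ℰ, Π, φ, Θ, Σ be real numbers with K > 0 satisfying K = μ/3 - ℰ - Π/2 + φ²/4 - (Θ/3 - Σ/2)². Suppose the gradient of K is given by ∇K = -K̇ u + K̂ e with K̇ = -(2Θ/3 - Σ)K and K̂ = -φK, so that the norm is ∇K·∇K = -K̇² + K̂². Then the Misner–Sharp mass M = (1/(2√K))·(1 - (∇K·∇K)/(4K³)) equals M = (1/(2K^{3/2}))·(μ/3 - ℰ - Π/2). -/

import Mathlib

/-! The field equation says `K = m + φ²/4 - (Θ/3 - Σ/2)²` with `m = μ/3 - ℰ - Π/2`, while the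
evolution and propagation equations give `∇K·∇K = 4K²(φ²/4 - (Θ/3 - Σ/2)²)`. Hence
`1 - ∇K·∇K/(4K³) = (K - φ²/4 + (Θ/3 - Σ/2)²)/K = m/K`, and `M = m/(2K√K)`. -/

lemma gradNorm_eq_of_lrs (K φ Θ S : ℝ) :
    -(-((2 / 3) * Θ - S) * K) ^ 2 + (-φ * K) ^ 2 = 4 * K ^ 2 * (φ ^ 2 / 4 - (Θ / 3 - S / 2) ^ 2) := by
  ring

lemma one_sub_div_eq_of_field_eq {K m q : ℝ} (hK0 : K ≠ 0) (hK : K = m + q) :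
    1 - 4 * K ^ 2 * q / (4 * K ^ 3) = m / K := by
  field_simp
  linear_combination hK

lemma Real.sqrt_pow_three {K : ℝ} (hK : 0 ≤ K) : Real.sqrt K ^ 3 = Real.sqrt K * K := by
  rw [pow_succ', sq_sqrt hK]

/-- The Misner–Sharp mass M = (1/(2√K))(1 - ∇K·∇K/(4K³)) equals
(1/(2K^{3/2}))(μ/3 - ℰ - P/2), given the LRS-II field equations for K.
Here S denotes the shear Σ and P the anisotropic stress Π. -/
theorem stmt_7 (K μ ℰ P φ Θ S Kdot Khat gradNorm M : ℝ)
    (hKpos : 0 < K)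
    (hK : K = μ / 3 - ℰ - P / 2 + φ ^ 2 / 4 - (Θ / 3 - S / 2) ^ 2)
    (hKdot : Kdot = -((2 / 3) * Θ - S) * K)
    (hKhat : Khat = -φ * K)
    (hgrad : gradNorm = -Kdot ^ 2 + Khat ^ 2)
    (hM : M = 1 / (2 * Real.sqrt K) * (1 - gradNorm / (4 * K ^ 3))) :
    M = 1 / (2 * Real.sqrt K ^ 3) * (μ / 3 - ℰ - P / 2) := by
  have hfactor : 1 - gradNorm / (4 * K ^ 3) = (μ / 3 - ℰ - P / 2) / K := by
    rw [hgrad, hKdot, hKhat, gradNorm_eq_of_lrs]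
    exact one_sub_div_eq_of_field_eq hKpos.ne' (by rw [hK]; ring)
  rw [hM, hfactor, Real.sqrt_pow_three hKpos.le]
  field_simp
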